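/- Fix α ∈ [0,1] and k ≥ 2, let (T_m)_{m≥1} be Ford's alpha growth process, and fix 𝐬 ∈ 𝕋_[k] with ℙ(T_k = 𝐬) > 0. For r ≥ 0 let (x_1(r),…,x_k(r),(y_B(r))_{B∈𝐬 internal}) denote the edge weights of ρ_k^{•(k+r)}(T_{k+r}). Then, conditionally on T_k = 𝐬, the process (x_1(r)−1,…,x_k(r)−1,(y_B(r))_{B∈𝐬 internal})_{r≥0} is distributed as the generalized Pólya urn (H_B(r))_{B∈𝐬, r≥0} with colors the edges of 𝐬 and initial counts H_B(0) = 0, in which at each step a color B is selected with probability proportional to (1−α) + H_B(r) if B is external and α + H_B(r) if B is internal, and the selected count increases by one. -/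

import Mathlib

open scoped Classical

noncomputable section

/-- The label set `[n] = {1, …, n}`. -/
def lbl (n : ℕ) : Finset ℕ := Finset.Icc 1 n

/-- A rooted binary tree with leaves labeled by the finite set `A ⊆ ℕ`,
encoded as the collection of its edges, where each edge is identified with
the set of leaf labels in the subtree above it. -/
def IsLTree (A : Finset ℕ) (t : Finset (Finset ℕ)) : Prop :=
  (∀ B ∈ t, B ⊆ A ∧ B.Nonempty) ∧
  (∀ j ∈ A, ({j} : Finset ℕ) ∈ t) ∧
  (∀ B₁ ∈ t, ∀ B₂ ∈ t, B₁ ∩ B₂ = ∅ ∨ B₁ ⊆ B₂ ∨ B₂ ⊆ B₁) ∧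
  (∀ B ∈ t, B ≠ A → ∃! B', B' ∈ t ∧ B ∩ B' = ∅ ∧ B ∪ B' ∈ t)

/-- The space `𝕋_A` of rooted binary trees with leaves labeled by `A`. -/
def LTree (A : Finset ℕ) : Type := {t : Finset (Finset ℕ) // IsLTree A t}

noncomputable instance fintypeLTree (A : Finset ℕ) : Fintype (LTree A) := by
  have hfin : {t : Finset (Finset ℕ) | IsLTree A t}.Finite := by
    apply Set.Finite.subset (A.powerset.powerset).finite_toSet
    intro t ht
    have h : IsLTree A t := ht
    simp only [Finset.mem_coe, Finset.mem_powerset]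
    intro B hB
    exact Finset.mem_powerset.mpr (h.1 B hB).1
  exact hfin.fintype

/-- Insertion of a new leaf labeled `j` on the edge `S` of the tree `s`. -/
def insertLeaf (s : Finset (Finset ℕ)) (S : Finset ℕ) (j : ℕ) : Finset (Finset ℕ) :=
  (s.filter fun B => B ∩ S = ∅) ∪ (s.filter fun B => B ⊆ S) ∪
    ((s.filter fun B => S ⊆ B).image fun B => B ∪ {j}) ∪ {({j} : Finset ℕ)}

/-- Ford growth weight of an edge: `α` for internal edges, `1 - α` for external edges. -/
def fordWeight (α : ℝ) (B : Finset ℕ) : ℝ := if 2 ≤ B.card then α else 1 - α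

/-- Modified Ford growth weight: the external edge `{1}` gets weight `α` instead of `1 - α`. -/
def fordWeightT (α : ℝ) (B : Finset ℕ) : ℝ :=
  if 2 ≤ B.card ∨ B = ({1} : Finset ℕ) then α else 1 - α

/-- One step of Ford's alpha growth: probability that a tree with `m` leaves `s`
grows into `t` by insertion of the new leaf `m+1` at an edge chosen with probability
proportional to `1-α` (external) or `α` (internal). -/
def growStepF (α : ℝ) (m : ℕ) (s t : Finset (Finset ℕ)) : ℝ :=
  ∑ S ∈ s, if t = insertLeaf s S (m + 1) then
    fordWeight α S / (∑ S' ∈ s, fordWeight α S') else 0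

/-- One step of the modified Ford alpha growth (edge `{1}` has weight `α`). -/
def growStepFT (α : ℝ) (m : ℕ) (s t : Finset (Finset ℕ)) : ℝ :=
  ∑ S ∈ s, if t = insertLeaf s S (m + 1) then
    fordWeightT α S / (∑ S' ∈ s, fordWeightT α S') else 0

/-- `qF α m` is the law `q_{m,α}` of the `m`-th tree of Ford's alpha growth process. -/
def qF (α : ℝ) : (m : ℕ) → LTree (lbl m) → ℝ
  | 0, _ => 1
  | 1, _ => 1
  | 2, _ => 1
  | (m + 3), t => ∑ s : LTree (lbl (m + 2)), qF α (m + 2) s * growStepF α (m + 2) s.1 t.1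

/-- `qFT α m` is the law `q̃_{m,α}` of the `m`-th tree of the modified Ford alpha
growth process in which the external edge `{1}` is chosen with probability
proportional to `α` rather than `1-α`. -/
def qFT (α : ℝ) : (m : ℕ) → LTree (lbl m) → ℝ
  | 0, _ => 1
  | 1, _ => 1
  | 2, _ => 1
  | (m + 3), t => ∑ s : LTree (lbl (m + 2)), qFT α (m + 2) s * growStepFT α (m + 2) s.1 t.1

/-- Mass of `q_{m,α}` at an arbitrary edge collection (zero on non-trees). -/
def qMass (α : ℝ) (m : ℕ) (u : Finset (Finset ℕ)) : ℝ :=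
  if h : IsLTree (lbl m) u then qF α m ⟨u, h⟩ else 0

/-- Mass of `q̃_{m,α}` at an arbitrary edge collection (zero on non-trees). -/
def qMassT (α : ℝ) (m : ℕ) (u : Finset (Finset ℕ)) : ℝ :=
  if h : IsLTree (lbl m) u then qFT α m ⟨u, h⟩ else 0

/-- Mass of the uniform distribution on `𝕋_{[n]}`. -/
def unifMass (n : ℕ) : ℝ := 1 / (Fintype.card (LTree (lbl n)) : ℝ)

/-- Uniform mass at an arbitrary edge collection (zero on non-trees). -/
def unifTreeMass (c : ℕ) (u : Finset (Finset ℕ)) : ℝ :=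
  if IsLTree (lbl c) u then unifMass c else 0

/-- Smallest label in a finite label set (`0` if empty). -/
def minLbl (B : Finset ℕ) : ℕ := if h : B.Nonempty then B.min' h else 0

/-- The sibling edge of `B` in the tree `t`. -/
def sibling (t : Finset (Finset ℕ)) (B : Finset ℕ) : Finset ℕ :=
  if h : ∃ B', B' ∈ t ∧ B ∩ B' = ∅ ∧ B ∪ B' ∈ t then h.choose else ∅

/-- The parent edge of `B` in the tree `t`. -/
def parentEdge (t : Finset (Finset ℕ)) (B : Finset ℕ) : Finset ℕ := B ∪ sibling t B

/-- `ĩ = max {i, a, b}` where `a`, `b` are the smallest leaf labels in the first two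
subtrees on the ancestral path from leaf `i` to the root of `t ∈ 𝕋_A`
(`b = 0` if the path has only one subtree). -/
def tildeOf (A : Finset ℕ) (t : Finset (Finset ℕ)) (i : ℕ) : ℕ :=
  max i (max (minLbl (sibling t {i}))
    (if parentEdge t {i} = A then 0 else minLbl (sibling t (parentEdge t {i}))))

/-- Swap the leaf labels `i` and `j` in the tree `t`. -/
def swapTree (t : Finset (Finset ℕ)) (i j : ℕ) : Finset (Finset ℕ) :=
  t.image (Finset.image fun x => Equiv.swap i j x)

/-- Delete the leaf labeled `j` from the tree `t` (contracting its parent branch point). -/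
def delLeaf (t : Finset (Finset ℕ)) (j : ℕ) : Finset (Finset ℕ) :=
  (t.image fun B => B.erase j).erase ∅

/-- Down-move of the uniform chain starting from `t ∈ 𝕋_A` with selected leaf `i`:
swap labels `i` and `ĩ = max{i,a,b}` and delete the leaf now labeled `ĩ`. -/
def downUnif (A : Finset ℕ) (t : Finset (Finset ℕ)) (i : ℕ) : Finset (Finset ℕ) :=
  delLeaf (swapTree t i (tildeOf A t i)) (tildeOf A t i)

/-- Relabel all labels `> j` down by one. -/
def relabelGt (j : ℕ) (t : Finset (Finset ℕ)) : Finset (Finset ℕ) :=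
  t.image (Finset.image fun x => if j < x then x - 1 else x)

/-- Down-move of the alpha chain: after removing the leaf labeled `ĩ`, relabel the
leaves `ĩ+1, …, n` by `ĩ, …, n-1`. -/
def downAlpha (A : Finset ℕ) (t : Finset (Finset ℕ)) (i : ℕ) : Finset (Finset ℕ) :=
  relabelGt (tildeOf A t i) (downUnif A t i)

/-- Transition matrix of the uniform chain on `𝕋_{[n]}` (Definition 1.1):
uniform leaf selection, label-swapped deletion, uniform edge re-insertion of `ĩ`. -/
def PUnif (n : ℕ) (t t' : LTree (lbl n)) : ℝ :=
  (1 / (n : ℝ)) * ∑ i ∈ lbl n,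
    (1 / ((downUnif (lbl n) t.1 i).card : ℝ)) *
      ∑ S ∈ downUnif (lbl n) t.1 i,
        (if t'.1 = insertLeaf (downUnif (lbl n) t.1 i) S (tildeOf (lbl n) t.1 i) then 1 else 0)

/-- Transition matrix of the alpha chain on `𝕋_{[n]}` (Definition 2.4):
uniform leaf selection, label-swapped deletion with relabeling, and insertion of a new
leaf labeled `n` according to the alpha growth rule. -/
def PAlpha (α : ℝ) (n : ℕ) (t t' : LTree (lbl n)) : ℝ :=
  (1 / (n : ℝ)) * ∑ i ∈ lbl n, growStepF α (n - 1) (downAlpha (lbl n) t.1 i) t'.1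

/-- `t ∩ A`: the subtree of `t` spanned by the labels in `A`, reduced. -/
def restrictT (t : Finset (Finset ℕ)) (A : Finset ℕ) : Finset (Finset ℕ) :=
  (t.image fun B => B ∩ A).erase ∅

/-- The most recent ancestor edge of leaf `j` in `t` (including `{j}` itself)
that intersects the label set `A`. -/
def ancEdgeA (t : Finset (Finset ℕ)) (A : Finset ℕ) (j : ℕ) : Finset ℕ :=
  if h : (t.filter fun C => j ∈ C ∧ (C ∩ A).Nonempty).Nonempty then
    (t.filter fun C => j ∈ C ∧ (C ∩ A).Nonempty).inf' h id
  else ∅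

/-- The projection `π` sending a leaf `j` of `t` to an edge of `t ∩ A`. -/
def piProjA (t : Finset (Finset ℕ)) (A : Finset ℕ) (j : ℕ) : Finset ℕ := ancEdgeA t A j ∩ A

/-- Decorated trees: a tree shape together with a mass assignment on edges
(extended by zero off the shape). -/
abbrev DecoT : Type := Finset (Finset ℕ) × (Finset ℕ → ℕ)

/-- The decorated tree `ρ_A^{•(n)}(t)`: the reduced subtree `t ∩ A` with each edge
carrying the number of leaves of `t` projecting to it. -/
def rhoDecoA (n : ℕ) (A : Finset ℕ) (t : Finset (Finset ℕ)) : DecoT :=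
  (restrictT t A, fun B => ((lbl n).filter fun j => piProjA t A j = B).card)

/-- The decorated `k`-tree `ρ_k^{•(n)}(t)`. -/
def rhoDeco (n k : ℕ) (t : Finset (Finset ℕ)) : DecoT := rhoDecoA n (lbl k) t

/-- Collapsed trees: a tree shape together with a label-set assignment on edges. -/
abbrev StarT : Type := Finset (Finset ℕ) × (Finset ℕ → Finset ℕ)

/-- The collapsed `n`-tree with `k` leaves `ρ_k^{⋆(n)}(t)`. -/
def rhoStar (n k : ℕ) (t : Finset (Finset ℕ)) : StarT :=
  (restrictT t (lbl k), fun B => (lbl n).filter fun j => piProjA t (lbl k) j = B)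

/-- Replace each label set of a collapsed tree by its cardinality. -/
def starToDeco (ts : StarT) : DecoT := (ts.1, fun B => (ts.2 B).card)

/-- Membership in `𝕋_{[k]}^{•(n)}`: decorated `k`-trees with total mass `n`,
external masses at least 1, and mass vanishing off the shape. -/
def IsDeco (k n : ℕ) (d : DecoT) : Prop :=
  IsLTree (lbl k) d.1 ∧ (∀ B, B ∉ d.1 → d.2 B = 0) ∧ (∑ B ∈ d.1, d.2 B) = n ∧
    ∀ j ∈ lbl k, 1 ≤ d.2 {j}

/-- Edge mass of `ρ_k^{•(n)}(t)`. -/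
def massOf (n k : ℕ) (t : Finset (Finset ℕ)) (B : Finset ℕ) : ℕ := (rhoDeco n k t).2 B

/-- The urn counts of the decorated `k`-tree of `t`:
`x_i - 1` on external edges and `y_B` on internal edges. -/
def urnOf (n k : ℕ) (t : Finset (Finset ℕ)) : Finset ℕ → ℕ :=
  fun B => if B.card ≤ 1 then massOf n k t B - 1 else massOf n k t B

/-- Rising factorial `a^{(j)} = a (a+1) ⋯ (a+j-1)`. -/
def risingFac (a : ℝ) : ℕ → ℝ
  | 0 => 1
  | (j + 1) => risingFac a j * (a + j)

/-- Dirichlet-multinomial distribution `DM^β₃(m)` on triples summing to `m`, with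
parameters `(1-β, 1-β, β)`. -/
def dm3 (β : ℝ) (m j1 j2 j3 : ℕ) : ℝ :=
  if j1 + j2 + j3 = m then
    ((m.factorial : ℝ) / ((j1.factorial : ℝ) * (j2.factorial : ℝ) * (j3.factorial : ℝ))) *
      (risingFac (1 - β) j1 * risingFac (1 - β) j2 * risingFac β j3) / risingFac (2 - β) m
  else 0

/-- The decrement matrix `δ_α(N : m)` of the `(α,α)` regenerative composition. -/
def deltaAlpha (α : ℝ) (N m : ℕ) : ℝ :=
  α * (N.choose m : ℝ) * Real.Gamma ((m : ℝ) - α) * Real.Gamma ((N : ℝ) - (m : ℝ) + α) /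
    (Real.Gamma (1 - α) * Real.Gamma ((N : ℝ) + α))

/-- `δ(N : m) = δ_{1/2}(N : m)` in its binomial-coefficient form. -/
def deltaHalf (N m : ℕ) : ℝ :=
  (1 / (2 * (m : ℝ) - 1)) * (((2 * m).choose m : ℝ) *
    (((2 * N - 2 * m).choose (N - m)) : ℝ) / (((2 * N).choose N) : ℝ))

/-- Increase the mass of edge `C` by one. -/
def bumpD (d : DecoT) (C : Finset ℕ) : DecoT :=
  (d.1, fun B => if B = C then d.2 B + 1 else d.2 B)

/-- Decrease the mass of edge `C` by one. -/
def dropD (d : DecoT) (C : Finset ℕ) : DecoT :=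
  (d.1, fun B => if B = C then d.2 B - 1 else d.2 B)

/-- Up-move on decorated trees of total mass `m`: choose an edge with probability
`(x_j - α)/(m - α)` (external) or `(y_B + α)/(m - α)` (internal) and increase its
mass by one. -/
def upProb (α : ℝ) (m : ℕ) (d d' : DecoT) : ℝ :=
  ∑ C ∈ d.1,
    ((if 2 ≤ C.card then (d.2 C : ℝ) + α else (d.2 C : ℝ) - α) / ((m : ℝ) - α)) *
      (if d' = bumpD d C then 1 else 0)

/-- Case (B) mass reshuffle: set the mass of external edge `B` to `m` and reduce the
mass of its parent by `m`. -/
def caseBD (d : DecoT) (B : Finset ℕ) (m : ℕ) : DecoT :=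
  (d.1, fun C => if C = B then m else if C = parentEdge d.1 B then d.2 C - m else d.2 C)

/-- Restrict a mass function to a shape (zero off the shape). -/
def restrictF (s : Finset (Finset ℕ)) (f : Finset ℕ → ℕ) : Finset ℕ → ℕ :=
  fun B => if B ∈ s then f B else 0

/-- Insert leaf `j` on the external edge `{c}` of the decorated tree `(s, f)`, splitting
the mass of `{c}` as `x_c := j1+1`, `x_j := j2+1`, `y_{{c,j}} := j3`. -/
def insDecoExt (s : Finset (Finset ℕ)) (f : Finset ℕ → ℕ) (c j j1 j2 j3 : ℕ) : DecoT :=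
  (insertLeaf s {c} j,
    restrictF (insertLeaf s {c} j) fun B =>
      if B = ({c} : Finset ℕ) then j1 + 1 else if B = ({j} : Finset ℕ) then j2 + 1
      else if B = ({c, j} : Finset ℕ) then j3
      else if j ∈ B then f (B.erase j) else f B)

/-- Insert leaf `j` on the internal edge `C` of the decorated tree `(s, f)`, splitting
the mass of `C` as `y_{C∪{j}} := j1`, `y_C := j2`, `x_j := j3+1`. -/
def insDecoInt (s : Finset (Finset ℕ)) (f : Finset ℕ → ℕ) (C : Finset ℕ)
    (j j1 j2 j3 : ℕ) : DecoT :=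
  (insertLeaf s C j,
    restrictF (insertLeaf s C j) fun B =>
      if B = C ∪ {j} then j1 else if B = C then j2 else if B = ({j} : Finset ℕ) then j3 + 1
      else if j ∈ B then f (B.erase j) else f B)

/-- Inserting the label `j` into a decorated tree (Definition 4.2), with edge-selection
normalizer `M`: an external edge `{i}` is selected with probability `(x_i - 1)/M` and
its mass split via `DM^α₃(x_i - 2)`; an internal edge `B` is selected with probability
`y_B/M` and its mass split via `DM^{1-α}₃(y_B - 1)`. -/
def insProb (α : ℝ) (M : ℕ) (j : ℕ) (d d' : DecoT) : ℝ :=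
  ∑ C ∈ d.1,
    if 2 ≤ C.card then
      ((d.2 C : ℝ) / (M : ℝ)) *
        ∑ a ∈ Finset.range (d.2 C), ∑ b ∈ Finset.range (d.2 C),
          dm3 (1 - α) (d.2 C - 1) a b (d.2 C - 1 - a - b) *
            (if d' = insDecoInt d.1 d.2 C j a b (d.2 C - 1 - a - b) then 1 else 0)
    else
      (((d.2 C : ℝ) - 1) / (M : ℝ)) *
        ∑ a ∈ Finset.range (d.2 C), ∑ b ∈ Finset.range (d.2 C),
          dm3 α (d.2 C - 2) a b (d.2 C - 2 - a - b) *
            (if d' = insDecoExt d.1 d.2 (minLbl C) j a b (d.2 C - 2 - a - b) then 1 else 0)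

/-- Steps (iii)-(v) of resampling the label `i` (Definition 4.4) into a decorated tree of
total mass `n-1` (`n` being the total mass before the drop): choose an edge with
probability `(x_j - 1/2)/(n - 3/2)` (external) or `(y_B + 1/2)/(n - 3/2)` (internal) and
insert leaf `i` there, splitting the increased mass via `DM^{1/2}₃`. -/
def resampProb (n : ℕ) (i : ℕ) (d d' : DecoT) : ℝ :=
  ∑ C ∈ d.1,
    if 2 ≤ C.card then
      (((d.2 C : ℝ) + 1 / 2) / ((n : ℝ) - 3 / 2)) *
        ∑ a ∈ Finset.range (d.2 C + 1), ∑ b ∈ Finset.range (d.2 C + 1),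
          dm3 (1 / 2) (d.2 C) a b (d.2 C - a - b) *
            (if d' = insDecoInt d.1 d.2 C i a b (d.2 C - a - b) then 1 else 0)
    else
      (((d.2 C : ℝ) - 1 / 2) / ((n : ℝ) - 3 / 2)) *
        ∑ a ∈ Finset.range (d.2 C), ∑ b ∈ Finset.range (d.2 C),
          dm3 (1 / 2) (d.2 C - 1) a b (d.2 C - 1 - a - b) *
            (if d' = insDecoExt d.1 d.2 (minLbl C) i a b (d.2 C - 1 - a - b) then 1 else 0)

/-- Swap labels `i` and `j` in a decorated tree. -/
def swapD (d : DecoT) (i j : ℕ) : DecoT :=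
  (d.1.image (Finset.image fun x => Equiv.swap i j x),
    fun C => d.2 (C.image fun x => Equiv.swap i j x))

/-- Case (C) of the uniform decorated chain: swap `i = min B` with `ĩ`, delete leaf `ĩ`
(with its mass 1 and parent mass 0) and resample `ĩ`. -/
def caseCUnif (n k : ℕ) (d : DecoT) (B : Finset ℕ) (d' : DecoT) : ℝ :=
  resampProb n (tildeOf (lbl k) d.1 (minLbl B))
    (delLeaf (swapD d (minLbl B) (tildeOf (lbl k) d.1 (minLbl B))).1
        (tildeOf (lbl k) d.1 (minLbl B)),
      restrictF (delLeaf (swapD d (minLbl B) (tildeOf (lbl k) d.1 (minLbl B))).1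
          (tildeOf (lbl k) d.1 (minLbl B)))
        fun C => (swapD d (minLbl B) (tildeOf (lbl k) d.1 (minLbl B))).2 C +
          (swapD d (minLbl B) (tildeOf (lbl k) d.1 (minLbl B))).2
            (C ∪ {tildeOf (lbl k) d.1 (minLbl B)}))
    d'

/-- Transition matrix of the uniform decorated chain on `𝕋_{[k]}^{•(n)}`
(Definition 4.6). -/
def RUnif (n k : ℕ) (d d' : DecoT) : ℝ :=
  ∑ B ∈ d.1,
    ((d.2 B : ℝ) / (n : ℝ)) *
      (if 2 ≤ B.card ∨ 2 ≤ d.2 B then upProb (1 / 2) (n - 1) (dropD d B) d'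
       else if 0 < d.2 (parentEdge d.1 B) then
         ∑ m ∈ Finset.Icc 1 (d.2 (parentEdge d.1 B)),
           deltaHalf (d.2 (parentEdge d.1 B)) m * upProb (1 / 2) (n - 1) (caseBD d B m) d'
       else caseCUnif n k d B d')

/-- Insertion of label `j` followed by an up-move (used in case (C) of the alpha
decorated chain). -/
def insThenUp (α : ℝ) (n k j : ℕ) (d : DecoT) (d' : DecoT) : ℝ :=
  ∑ C ∈ d.1,
    if 2 ≤ C.card then
      ((d.2 C : ℝ) / ((n : ℝ) - (k : ℝ))) *
        ∑ a ∈ Finset.range (d.2 C), ∑ b ∈ Finset.range (d.2 C),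
          dm3 (1 - α) (d.2 C - 1) a b (d.2 C - 1 - a - b) *
            upProb α (n - 1) (insDecoInt d.1 d.2 C j a b (d.2 C - 1 - a - b)) d'
    else
      (((d.2 C : ℝ) - 1) / ((n : ℝ) - (k : ℝ))) *
        ∑ a ∈ Finset.range (d.2 C), ∑ b ∈ Finset.range (d.2 C),
          dm3 α (d.2 C - 2) a b (d.2 C - 2 - a - b) *
            upProb α (n - 1) (insDecoExt d.1 d.2 (minLbl C) j a b (d.2 C - 2 - a - b)) d'

/-- Dropping the label `it` from a decorated tree (Definition 4.1): delete leaf `it`,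
discard its mass and its parent's mass, and relabel the labels `> it` down by one. -/
def dropLabelD (d : DecoT) (it : ℕ) : DecoT :=
  ((delLeaf d.1 it).image (Finset.image fun x => if it < x then x - 1 else x),
    restrictF ((delLeaf d.1 it).image (Finset.image fun x => if it < x then x - 1 else x))
      fun C =>
        restrictF (delLeaf d.1 it) (fun C' => d.2 C' + d.2 (C' ∪ {it}))
          (C.image fun x => if it ≤ x then x + 1 else x))

/-- Case (C) of the alpha decorated chain: swap, drop the label `ĩ` (with relabeling),
insert the label `k` and perform an up-move. -/
def caseCAlpha (α : ℝ) (n k : ℕ) (d : DecoT) (B : Finset ℕ) (d' : DecoT) : ℝ :=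
  insThenUp α n k k
    (dropLabelD (swapD d (minLbl B) (tildeOf (lbl k) d.1 (minLbl B)))
      (tildeOf (lbl k) d.1 (minLbl B))) d'

/-- Transition matrix of the alpha decorated chain on `𝕋_{[k]}^{•(n)}`
(Definition 4.7). -/
def RAlpha (α : ℝ) (n k : ℕ) (d d' : DecoT) : ℝ :=
  ∑ B ∈ d.1,
    ((d.2 B : ℝ) / (n : ℝ)) *
      (if 2 ≤ B.card ∨ 2 ≤ d.2 B then upProb α (n - 1) (dropD d B) d'
       else if 0 < d.2 (parentEdge d.1 B) then
         ∑ m ∈ Finset.Icc 1 (d.2 (parentEdge d.1 B)),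
           deltaAlpha α (d.2 (parentEdge d.1 B)) m * upProb α (n - 1) (caseBD d B m) d'
       else caseCAlpha α n k d B d')

/-- The sub-probability transition matrix of the alpha decorated chain restricted to
moves that do not use case (C). -/
def RAlphaNoC (α : ℝ) (n k : ℕ) (d d' : DecoT) : ℝ :=
  ∑ B ∈ d.1,
    ((d.2 B : ℝ) / (n : ℝ)) *
      (if 2 ≤ B.card ∨ 2 ≤ d.2 B then upProb α (n - 1) (dropD d B) d'
       else if 0 < d.2 (parentEdge d.1 B) then
         ∑ m ∈ Finset.Icc 1 (d.2 (parentEdge d.1 B)),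
           deltaAlpha α (d.2 (parentEdge d.1 B)) m * upProb α (n - 1) (caseBD d B m) d'
       else 0)

/-- Probability that the next transition of the alpha decorated chain uses case (C)
and drops the label `it`. -/
def probDropC (n k : ℕ) (d : DecoT) (it : ℕ) : ℝ :=
  ∑ B ∈ d.1,
    if ¬(2 ≤ B.card ∨ 2 ≤ d.2 B) ∧ d.2 (parentEdge d.1 B) = 0 ∧
        tildeOf (lbl k) d.1 (minLbl B) = it then (d.2 B : ℝ) / (n : ℝ)
    else 0

/-- Rank (1-based) of `a` within the finite label set `A`. -/
def rankIn (A : Finset ℕ) (a : ℕ) : ℕ := (A.filter fun x => x ≤ a).card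

/-- Relabel the labels appearing in `u` by their ranks within `A`. -/
def relabelRank (A : Finset ℕ) (u : Finset (Finset ℕ)) : Finset (Finset ℕ) :=
  u.image (Finset.image (rankIn A))

/-- The label set `π^{-1}(B)` of leaves of `t` projecting to the edge `B` of `t ∩ [k]`. -/
def preimLbl (n k : ℕ) (t : Finset (Finset ℕ)) (B : Finset ℕ) : Finset ℕ :=
  (lbl n).filter fun j => piProjA t (lbl k) j = B

/-- The lowest edge of `t` mapping onto the edge `B` of `t ∩ [k]`. -/
def bottomEdge (k : ℕ) (t : Finset (Finset ℕ)) (B : Finset ℕ) : Finset ℕ :=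
  if h : (t.filter fun C => C ∩ lbl k = B).Nonempty then
    (t.filter fun C => C ∩ lbl k = B).inf' h id
  else ∅

/-- The internal structure `int(V_B)` of `ρ_k^{•(n)}(t)` supported on the edge `B` of
`t ∩ [k]`: the subtree of `t` collapsing to `B`, with the vertex corresponding to `B`
turned into a leaf labeled `1` if `B` is internal, all leaves relabeled by ranks. -/
def intStruct (n k : ℕ) (t : Finset (Finset ℕ)) (B : Finset ℕ) : Finset (Finset ℕ) :=
  if 2 ≤ B.card then
    relabelRank (insert 0 (preimLbl n k t B))
      ((t.image fun C =>
        (C ∩ preimLbl n k t B) ∪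
          (if (C ∩ bottomEdge k t B).Nonempty then ({0} : Finset ℕ) else ∅)).erase ∅)
  else
    relabelRank (preimLbl n k t B) ((t.image fun C => C ∩ preimLbl n k t B).erase ∅)

/-- The kernel `Λ(𝐭⋆, ·) = q_{n,1/2}( · ∣ ρ_k^{⋆(n)} = 𝐭⋆)`. -/
def LamStar (n k : ℕ) (ts : StarT) (t : LTree (lbl n)) : ℝ :=
  (unifMass n * (if rhoStar n k t.1 = ts then 1 else 0)) /
    (∑ t' : LTree (lbl n), unifMass n * (if rhoStar n k t'.1 = ts then 1 else 0))

/-- The induced transition matrix `K = Λ P ρ_k^{⋆(n)}` on collapsed trees. -/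
def KColl (n k : ℕ) (ts ts' : StarT) : ℝ :=
  ∑ t : LTree (lbl n), LamStar n k ts t *
    (∑ t'' : LTree (lbl n), PUnif n t t'' * (if rhoStar n k t''.1 = ts' then 1 else 0))

/-- The set `𝕋_{[k]}^{⋆(n)}` of collapsed `n`-trees with `k` leaves. -/
def allStar (n k : ℕ) : Finset StarT :=
  (Finset.univ : Finset (LTree (lbl n))).image fun t => rhoStar n k t.1

/-- The set `𝕋_{[k]}^{•(n)}` of decorated `k`-trees arising from `n`-trees. -/
def allDeco (n k : ℕ) : Finset DecoT :=
  (Finset.univ : Finset (LTree (lbl n))).image fun t => rhoDeco n k t.1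

/-- The kernel `Λ^{(α)}(𝐭•, ·) = q_{n,α}( · ∣ ρ_k^{•(n)} = 𝐭•)`. -/
def LamDeco (α : ℝ) (n k : ℕ) (d : DecoT) (t : LTree (lbl n)) : ℝ :=
  (qF α n t * (if rhoDeco n k t.1 = d then 1 else 0)) /
    (∑ t' : LTree (lbl n), qF α n t' * (if rhoDeco n k t'.1 = d then 1 else 0))

/-- Update rule of the generalized Pólya urn. -/
def bumpF (c : Finset ℕ → ℕ) (B : Finset ℕ) : Finset ℕ → ℕ :=
  fun C => if C = B then c C + 1 else c C

/-- One step of the generalized Pólya urn with colors the edges of `s`, in which color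
`B` is selected with probability proportional to `(1-α) + c B` (external) or
`α + c B` (internal). -/
def urnStep (α : ℝ) (s : Finset (Finset ℕ)) (c c' : Finset ℕ → ℕ) : ℝ :=
  ∑ B ∈ s, ((fordWeight α B + (c B : ℝ)) / (∑ B' ∈ s, (fordWeight α B' + (c B' : ℝ)))) *
    (if c' = bumpF c B then 1 else 0)

end

/-!
Project every edge `S` of the growing tree `T_m` onto the edge `projEdge [k] T_m S` of
`T_m ∩ [k] = 𝐬` into which it collapses. Inserting the leaf `m + 1` on an edge `S` raises the
mass of the projection of `S` by one and leaves all other masses and projections unchanged;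
it also adds, above that projection, a new leaf (weight `1 - α`) and a new internal edge
(weight `α`). By induction, the growth weights of the edges of `T_m` lying over an edge `B`
of `𝐬` therefore add up to `fordWeight α B + H_B`, so the next leaf lands over `B` with
probability proportional to the urn weight of `B`. Thus the urn counts are a function of the
growth chain whose one-step law depends only on the current counts, and by Dynkin's criterion
they form the Pólya urn chain.
-/

open Finset

section LabelSets

lemma mem_lbl {n a : ℕ} : a ∈ lbl n ↔ 1 ≤ a ∧ a ≤ n := mem_Icc

lemma lbl_succ (m : ℕ) : lbl (m + 1) = insert (m + 1) (lbl m) := by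
  ext x
  simp only [mem_lbl, mem_insert]
  omega

lemma succ_notMem_lbl_of_le {k m : ℕ} (hkm : k ≤ m) : m + 1 ∉ lbl k := fun h => by
  have := (mem_lbl.mp h).2
  omega

lemma lbl_inter_nonempty {k m : ℕ} (hk : 1 ≤ k) (hkm : k ≤ m) : (lbl m ∩ lbl k).Nonempty :=
  ⟨1, mem_inter.mpr ⟨mem_lbl.mpr ⟨le_rfl, hk.trans hkm⟩, mem_lbl.mpr ⟨le_rfl, hk⟩⟩⟩

end LabelSets

section FinsetLemmas

variable {j : ℕ}

lemma eq_of_subset_of_inter_eq_empty_or_subset {S C : Finset ℕ} (hS : S.Nonempty)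
    (hC : C ∩ S = ∅ ∨ C ⊆ S) (hSC : S ⊆ C) : C = S := by
  simp only [Finset.ext_iff, subset_iff, mem_inter, notMem_empty, iff_false, Finset.Nonempty,
    not_and] at *
  grind

lemma union_singleton_ne_singleton {D : Finset ℕ} (hD : D.Nonempty) (hjD : j ∉ D) :
    D ∪ {j} ≠ {j} := by
  simp only [ne_eq, Finset.ext_iff, mem_union, mem_singleton, Finset.Nonempty] at *
  grind

lemma union_singleton_cancel {C D : Finset ℕ} (hC : j ∉ C) (hD : j ∉ D)
    (h : C ∪ {j} = D ∪ {j}) : C = D := by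
  simp only [Finset.ext_iff, mem_union, mem_singleton] at *
  grind

lemma union_singleton_erase {D : Finset ℕ} (hjD : j ∉ D) : (D ∪ {j}).erase j = D := by
  rw [union_singleton, erase_insert hjD]

lemma mem_inf'_id {F : Finset (Finset ℕ)} (hF : F.Nonempty) {x : ℕ} :
    x ∈ F.inf' hF id ↔ ∀ C ∈ F, x ∈ C := by
  simp only [← singleton_subset_iff, le_inf'_iff, id]

lemma sum_mul_comp_eq_sum_fiber {ι κ : Type*} [DecidableEq κ] {t : Finset ι} {s : Finset κ}
    {g : ι → κ} (hg : ∀ i ∈ t, g i ∈ s) (f : ι → ℝ) (F : κ → ℝ) :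
    ∑ i ∈ t, f i * F (g i) = ∑ b ∈ s, (∑ i ∈ t with g i = b, f i) * F b := by
  rw [← sum_fiberwise_of_maps_to hg]
  refine sum_congr rfl fun b _ => ?_
  rw [sum_mul]
  exact sum_congr rfl fun i hi => by rw [(mem_filter.mp hi).2]

end FinsetLemmas

namespace IsLTree

variable {A : Finset ℕ} {t : Finset (Finset ℕ)}

lemma subset (ht : IsLTree A t) {B : Finset ℕ} (hB : B ∈ t) : B ⊆ A := (ht.1 B hB).1

lemma nonempty (ht : IsLTree A t) {B : Finset ℕ} (hB : B ∈ t) : B.Nonempty := (ht.1 B hB).2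

lemma singleton_mem (ht : IsLTree A t) {i : ℕ} (hi : i ∈ A) : {i} ∈ t := ht.2.1 i hi

lemma laminar (ht : IsLTree A t) {B₁ B₂ : Finset ℕ} (h₁ : B₁ ∈ t) (h₂ : B₂ ∈ t) :
    B₁ ∩ B₂ = ∅ ∨ B₁ ⊆ B₂ ∨ B₂ ⊆ B₁ :=
  ht.2.2.1 B₁ h₁ B₂ h₂

lemma existsUnique_sibling (ht : IsLTree A t) {B : Finset ℕ} (hB : B ∈ t) (hBA : B ≠ A) :
    ∃! B', B' ∈ t ∧ B ∩ B' = ∅ ∧ B ∪ B' ∈ t :=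
  ht.2.2.2 B hB hBA

lemma notMem_of_mem (ht : IsLTree A t) {j : ℕ} (hj : j ∉ A) {B : Finset ℕ} (hB : B ∈ t) :
    j ∉ B :=
  fun h => hj (ht.subset hB h)

/-- An edge of maximal size has no sibling, so it is the root. -/
lemma root_mem (ht : IsLTree A t) (hA : A.Nonempty) : A ∈ t := by
  obtain ⟨i, hi⟩ := hA
  obtain ⟨C, hC, hmax⟩ := exists_max_image t card ⟨{i}, ht.singleton_mem hi⟩
  by_contra hA
  obtain ⟨C', ⟨hC', hdisj, hunion⟩, -⟩ := ht.existsUnique_sibling hC fun h => hA (h ▸ hC)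
  have hle := hmax _ hunion
  rw [card_union_of_disjoint (disjoint_iff_inter_eq_empty.mpr hdisj)] at hle
  have := card_pos.mpr (ht.nonempty hC')
  omega

lemma ssubset_of_not_inter_eq_empty_or_subset (ht : IsLTree A t) {S₀ C : Finset ℕ}
    (hS₀ : S₀ ∈ t) (hC : C ∈ t) (hP : ¬(C ∩ S₀ = ∅ ∨ C ⊆ S₀)) : S₀ ⊂ C := by
  rcases ht.laminar hC hS₀ with h | h | h
  · exact absurd (Or.inl h) hP
  · exact absurd (Or.inr h) hP
  · exact ssubset_of_subset_of_ne h fun h' => hP (Or.inr h'.ge)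

end IsLTree

section InsertLeaf

variable {A : Finset ℕ} {t : Finset (Finset ℕ)} {S₀ : Finset ℕ} {j : ℕ}

lemma mem_insertLeaf_iff {C' : Finset ℕ} :
    C' ∈ insertLeaf t S₀ j ↔ (C' ∈ t ∧ (C' ∩ S₀ = ∅ ∨ C' ⊆ S₀)) ∨
      (∃ C ∈ t, S₀ ⊆ C ∧ C ∪ {j} = C') ∨ C' = {j} := by
  simp only [insertLeaf, mem_union, mem_filter, mem_image, mem_singleton, and_assoc,
    ← and_or_left, or_assoc]

lemma mem_insertLeaf_of_mem {C : Finset ℕ} (hC : C ∈ t) (h : C ∩ S₀ = ∅ ∨ C ⊆ S₀) :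
    C ∈ insertLeaf t S₀ j :=
  mem_insertLeaf_iff.mpr (Or.inl ⟨hC, h⟩)

lemma union_mem_insertLeaf {C : Finset ℕ} (hC : C ∈ t) (h : S₀ ⊆ C) :
    C ∪ {j} ∈ insertLeaf t S₀ j :=
  mem_insertLeaf_iff.mpr (Or.inr (Or.inl ⟨C, hC, h, rfl⟩))

lemma singleton_mem_insertLeaf : {j} ∈ insertLeaf t S₀ j :=
  mem_insertLeaf_iff.mpr (Or.inr (Or.inr rfl))

lemma mem_of_mem_insertLeaf {C' : Finset ℕ} (h : C' ∈ insertLeaf t S₀ j) (hjC' : j ∉ C') :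
    C' ∈ t ∧ (C' ∩ S₀ = ∅ ∨ C' ⊆ S₀) := by
  rcases mem_insertLeaf_iff.mp h with h | ⟨C, -, -, rfl⟩ | rfl
  · exact h
  all_goals simp at hjC'

namespace IsLTree

lemma exists_union_eq_of_mem_insertLeaf (ht : IsLTree A t) (hj : j ∉ A) {C' : Finset ℕ}
    (h : C' ∈ insertLeaf t S₀ j) (hjC' : j ∈ C') (hne : C' ≠ {j}) :
    ∃ C ∈ t, S₀ ⊆ C ∧ C ∪ {j} = C' := by
  rcases mem_insertLeaf_iff.mp h with ⟨hC', -⟩ | h | h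
  · exact absurd hjC' (ht.notMem_of_mem hj hC')
  · exact h
  · exact absurd h hne

lemma union_mem_insertLeaf_iff (ht : IsLTree A t) (hj : j ∉ A) {D : Finset ℕ}
    (hD : D.Nonempty) (hjD : j ∉ D) : D ∪ {j} ∈ insertLeaf t S₀ j ↔ D ∈ t ∧ S₀ ⊆ D := by
  refine ⟨fun h => ?_, fun h => union_mem_insertLeaf h.1 h.2⟩
  obtain ⟨C, hC, hSC, hCD⟩ := ht.exists_union_eq_of_mem_insertLeaf hj h (by simp)
    (union_singleton_ne_singleton hD hjD)
  obtain rfl := union_singleton_cancel (ht.notMem_of_mem hj hC) hjD hCD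
  exact ⟨hC, hSC⟩

lemma erase_mem_of_mem_insertLeaf (ht : IsLTree A t) (hj : j ∉ A) {C' : Finset ℕ}
    (h : C' ∈ insertLeaf t S₀ j) (hne : C' ≠ {j}) :
    C'.erase j ∈ t ∧ (j ∈ C' → S₀ ⊆ C'.erase j) := by
  by_cases hjC' : j ∈ C'
  · obtain ⟨D, hD, hSD, rfl⟩ := ht.exists_union_eq_of_mem_insertLeaf hj h hjC' hne
    rw [union_singleton_erase (ht.notMem_of_mem hj hD)]
    exact ⟨hD, fun _ => hSD⟩
  · rw [erase_eq_of_notMem hjC']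
    exact ⟨(mem_of_mem_insertLeaf h hjC').1, fun h => absurd h hjC'⟩

lemma laminar_insertLeaf (ht : IsLTree A t) (hj : j ∉ A) (hS₀ : S₀ ∈ t) {B₁ B₂ : Finset ℕ}
    (h₁ : B₁ ∈ insertLeaf t S₀ j) (h₂ : B₂ ∈ insertLeaf t S₀ j) :
    B₁ ∩ B₂ = ∅ ∨ B₁ ⊆ B₂ ∨ B₂ ⊆ B₁ := by
  have hS₀ne := ht.nonempty hS₀
  rcases mem_insertLeaf_iff.mp h₁ with ⟨h₁t, h₁P⟩ | ⟨C₁, hC₁, hS₁, rfl⟩ | rfl <;>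
  rcases mem_insertLeaf_iff.mp h₂ with ⟨h₂t, h₂P⟩ | ⟨C₂, hC₂, hS₂, rfl⟩ | rfl
  · exact ht.laminar h₁t h₂t
  · have := ht.laminar h₁t hC₂
    have := ht.notMem_of_mem hj h₁t
    simp only [Finset.ext_iff, subset_iff, mem_inter, mem_union, mem_singleton, notMem_empty,
      iff_false, not_and, Finset.Nonempty] at *
    grind
  · exact Or.inl (inter_singleton_of_notMem (ht.notMem_of_mem hj h₁t))
  · have := ht.laminar hC₁ h₂t
    have := ht.notMem_of_mem hj h₂t
    simp only [Finset.ext_iff, subset_iff, mem_inter, mem_union, mem_singleton, notMem_empty,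
      iff_false, not_and, Finset.Nonempty] at *
    grind
  · have := ht.laminar hC₁ hC₂
    simp only [Finset.ext_iff, subset_iff, mem_inter, mem_union, mem_singleton, notMem_empty,
      iff_false, not_and, Finset.Nonempty] at *
    grind
  · exact Or.inr (Or.inr subset_union_right)
  · exact Or.inl (singleton_inter_of_notMem (ht.notMem_of_mem hj h₂t))
  · exact Or.inr (Or.inl subset_union_right)
  · exact Or.inr (Or.inl subset_rfl)

lemma existsUnique_sibling_singleton_insertLeaf (ht : IsLTree A t) (hj : j ∉ A)
    (hS₀ : S₀ ∈ t) :
    ∃! B, B ∈ insertLeaf t S₀ j ∧ {j} ∩ B = ∅ ∧ {j} ∪ B ∈ insertLeaf t S₀ j := by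
  have hjS₀ := ht.notMem_of_mem hj hS₀
  refine ⟨S₀, ⟨mem_insertLeaf_of_mem hS₀ (Or.inr subset_rfl), singleton_inter_of_notMem hjS₀,
    ?_⟩, ?_⟩
  · rw [union_comm]
    exact union_mem_insertLeaf hS₀ subset_rfl
  rintro B ⟨hB, hjB, hunion⟩
  replace hjB : j ∉ B := fun h => by simp [singleton_inter_of_mem h] at hjB
  obtain ⟨hBt, hBP⟩ := mem_of_mem_insertLeaf hB hjB
  rw [union_comm, ht.union_mem_insertLeaf_iff hj (ht.nonempty hBt) hjB] at hunion
  exact eq_of_subset_of_inter_eq_empty_or_subset (ht.nonempty hS₀) hBP hunion.2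

lemma existsUnique_sibling_self_insertLeaf (ht : IsLTree A t) (hj : j ∉ A) (hS₀ : S₀ ∈ t) :
    ∃! B, B ∈ insertLeaf t S₀ j ∧ S₀ ∩ B = ∅ ∧ S₀ ∪ B ∈ insertLeaf t S₀ j := by
  have hjS₀ := ht.notMem_of_mem hj hS₀
  have hS₀ne := ht.nonempty hS₀
  refine ⟨{j}, ⟨singleton_mem_insertLeaf, inter_singleton_of_notMem hjS₀,
    union_mem_insertLeaf hS₀ subset_rfl⟩, ?_⟩
  rintro B ⟨hB, hdisj, hunion⟩
  by_cases hjB : j ∈ B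
  · by_contra hne
    obtain ⟨C, -, hSC, rfl⟩ := ht.exists_union_eq_of_mem_insertLeaf hj hB hjB hne
    simp only [Finset.ext_iff, subset_iff, mem_inter, mem_union, mem_singleton, notMem_empty,
      iff_false, not_and, Finset.Nonempty] at *
    grind
  · have hBne := ht.nonempty (mem_of_mem_insertLeaf hB hjB).1
    have hP := (mem_of_mem_insertLeaf hunion (by simp [hjS₀, hjB])).2
    simp only [Finset.ext_iff, subset_iff, mem_inter, mem_union, mem_singleton, notMem_empty,
      iff_false, not_and, Finset.Nonempty] at *
    grind

lemma existsUnique_sibling_union_insertLeaf (ht : IsLTree A t) (hj : j ∉ A) {C : Finset ℕ}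
    (hC : C ∈ t) (hSC : S₀ ⊆ C) (hCA : C ≠ A) :
    ∃! B, B ∈ insertLeaf t S₀ j ∧ (C ∪ {j}) ∩ B = ∅ ∧ C ∪ {j} ∪ B ∈ insertLeaf t S₀ j := by
  obtain ⟨C₂, ⟨hC₂, hdisj, hunion⟩, huniq⟩ := ht.existsUnique_sibling hC hCA
  have hjC := ht.notMem_of_mem hj hC
  have hjC₂ := ht.notMem_of_mem hj hC₂
  refine ⟨C₂, ⟨mem_insertLeaf_of_mem hC₂ (Or.inl ?_), ?_, ?_⟩, ?_⟩
  · simp only [Finset.ext_iff, subset_iff, mem_inter, notMem_empty, iff_false, not_and] at *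
    grind
  · simp only [Finset.ext_iff, mem_inter, mem_union, mem_singleton, notMem_empty, iff_false,
      not_and] at *
    grind
  · rw [union_right_comm]
    exact union_mem_insertLeaf hunion (hSC.trans subset_union_left)
  rintro B ⟨hB, hdisjB, hunionB⟩
  have hjB : j ∉ B := fun h => by simpa [h] using Finset.ext_iff.mp hdisjB j
  have hCB : C ∩ B = ∅ := by
    simp only [Finset.ext_iff, mem_inter, mem_union, mem_singleton, notMem_empty, iff_false,
      not_and] at *
    grind
  rw [union_right_comm, ht.union_mem_insertLeaf_iff hj ((ht.nonempty hC).mono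
    subset_union_left) (by simp [hjC, hjB])] at hunionB
  exact huniq B ⟨(mem_of_mem_insertLeaf hB hjB).1, hCB, hunionB.1⟩

lemma sibling_insertLeaf_eq_or (ht : IsLTree A t) (hj : j ∉ A) {B B₂ : Finset ℕ} (hB : B ∈ t)
    (hS₀B : ¬S₀ ⊆ B) (huniq : ∀ B', B' ∈ t ∧ B ∩ B' = ∅ ∧ B ∪ B' ∈ t → B' = B₂) {B' : Finset ℕ}
    (hB' : B' ∈ insertLeaf t S₀ j) (hdisj : B ∩ B' = ∅) (hunion : B ∪ B' ∈ insertLeaf t S₀ j) :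
    B' = B₂ ∨ (S₀ ⊆ B₂ ∧ B' = B₂ ∪ {j}) := by
  have hjB := ht.notMem_of_mem hj hB
  have hBne := ht.nonempty hB
  by_cases hjB' : j ∈ B'
  · right
    by_cases hB'j : B' = {j}
    · subst hB'j
      exact absurd ((ht.union_mem_insertLeaf_iff hj hBne hjB).mp hunion).2 hS₀B
    obtain ⟨C, hC, hSC, rfl⟩ := ht.exists_union_eq_of_mem_insertLeaf hj hB' hjB' hB'j
    have hjC := ht.notMem_of_mem hj hC
    have hBC : B ∩ C = ∅ := by
      simp only [Finset.ext_iff, mem_inter, mem_union, mem_singleton, notMem_empty, iff_false,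
        not_and] at *
      grind
    rw [← union_assoc, ht.union_mem_insertLeaf_iff hj (hBne.mono subset_union_left)
      (by simp [hjB, hjC])] at hunion
    obtain rfl := huniq C ⟨hC, hBC, hunion.1⟩
    exact ⟨hSC, rfl⟩
  · left
    refine huniq B' ⟨(mem_of_mem_insertLeaf hB' hjB').1, hdisj, ?_⟩
    exact (mem_of_mem_insertLeaf hunion (by simp [hjB, hjB'])).1

lemma existsUnique_sibling_insertLeaf_of_mem (ht : IsLTree A t) (hj : j ∉ A) (hS₀ : S₀ ∈ t)
    {B : Finset ℕ} (hB : B ∈ t) (hBP : B ∩ S₀ = ∅ ∨ B ⊆ S₀) (hBS : B ≠ S₀) :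
    ∃! B', B' ∈ insertLeaf t S₀ j ∧ B ∩ B' = ∅ ∧ B ∪ B' ∈ insertLeaf t S₀ j := by
  have hS₀ne := ht.nonempty hS₀
  have hBne := ht.nonempty hB
  have hS₀B : ¬S₀ ⊆ B := fun h => hBS (eq_of_subset_of_inter_eq_empty_or_subset hS₀ne hBP h)
  obtain ⟨B₂, ⟨hB₂, hdisj, hunion⟩, huniq⟩ :=
    ht.existsUnique_sibling hB fun h => hS₀B (h ▸ ht.subset hS₀)
  have hjB := ht.notMem_of_mem hj hB
  have hjB₂ := ht.notMem_of_mem hj hB₂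
  have hU := ht.laminar hunion hS₀
  have h₁ := ht.laminar hS₀ hB
  have h₂ := ht.laminar hS₀ hB₂
  by_cases hSB₂ : S₀ ⊆ B₂
  · refine ⟨B₂ ∪ {j}, ⟨union_mem_insertLeaf hB₂ hSB₂, ?_, ?_⟩, fun B' ⟨hB', hd, hu⟩ => ?_⟩
    · simp only [Finset.ext_iff, mem_inter, mem_union, mem_singleton, notMem_empty, iff_false,
        not_and] at *
      grind
    · rw [← union_assoc]
      exact union_mem_insertLeaf hunion (hSB₂.trans subset_union_right)
    rcases ht.sibling_insertLeaf_eq_or hj hB hS₀B huniq hB' hd hu with rfl | ⟨-, rfl⟩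
    · have hP := (mem_of_mem_insertLeaf hu (by simp [hjB, hjB₂])).2
      clear huniq
      simp only [Finset.ext_iff, subset_iff, mem_inter, mem_union, notMem_empty, iff_false,
        not_and, Finset.Nonempty] at *
      grind
    · rfl
  · have hP : (B ∪ B₂) ∩ S₀ = ∅ ∨ B ∪ B₂ ⊆ S₀ := by
      clear huniq
      simp only [Finset.ext_iff, subset_iff, mem_inter, mem_union, notMem_empty, iff_false,
        not_and, Finset.Nonempty] at *
      grind
    have hB₂P : B₂ ∩ S₀ = ∅ ∨ B₂ ⊆ S₀ := by
      rcases h₂ with h | h | h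
      exacts [Or.inl (inter_comm S₀ B₂ ▸ h), absurd h hSB₂, Or.inr h]
    refine ⟨B₂, ⟨mem_insertLeaf_of_mem hB₂ hB₂P, hdisj, mem_insertLeaf_of_mem hunion hP⟩,
      fun B' ⟨hB', hd, hu⟩ => ?_⟩
    rcases ht.sibling_insertLeaf_eq_or hj hB hS₀B huniq hB' hd hu with rfl | ⟨h, -⟩
    · rfl
    · exact absurd h hSB₂

end IsLTree

theorem isLTree_insertLeaf (ht : IsLTree A t) (hj : j ∉ A) (hS₀ : S₀ ∈ t) :
    IsLTree (insert j A) (insertLeaf t S₀ j) := by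
  refine ⟨fun B hB => ?_, fun i hi => ?_, fun B₁ h₁ B₂ h₂ => ht.laminar_insertLeaf hj hS₀ h₁ h₂,
    fun B hB hBA => ?_⟩
  · rcases mem_insertLeaf_iff.mp hB with ⟨hBt, -⟩ | ⟨C, hC, -, rfl⟩ | rfl
    · exact ⟨(ht.subset hBt).trans (subset_insert j A), ht.nonempty hBt⟩
    · exact ⟨union_subset ((ht.subset hC).trans (subset_insert j A)) (by simp),
        (ht.nonempty hC).mono subset_union_left⟩
    · simp
  · rcases mem_insert.mp hi with rfl | hi
    · exact singleton_mem_insertLeaf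
    refine mem_insertLeaf_of_mem (ht.singleton_mem hi) ?_
    rcases ht.laminar (ht.singleton_mem hi) hS₀ with h | h | h
    · exact Or.inl h
    · exact Or.inr h
    · rw [(subset_singleton_iff.mp h).resolve_left (ht.nonempty hS₀).ne_empty]
      exact Or.inr subset_rfl
  · rcases mem_insertLeaf_iff.mp hB with ⟨hBt, hBP⟩ | ⟨C, hC, hSC, rfl⟩ | rfl
    · by_cases hBS : B = S₀
      · subst hBS
        exact ht.existsUnique_sibling_self_insertLeaf hj hBt
      · exact ht.existsUnique_sibling_insertLeaf_of_mem hj hS₀ hBt hBP hBS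
    · refine ht.existsUnique_sibling_union_insertLeaf hj hC hSC ?_
      rintro rfl
      exact hBA (union_singleton j C)
    · exact ht.existsUnique_sibling_singleton_insertLeaf hj hS₀

lemma IsLTree.filter_superset_eq_insert (ht : IsLTree A t) (hS₀ : S₀ ∈ t) :
    {C ∈ t | S₀ ⊆ C} = insert S₀ {C ∈ t | ¬(C ∩ S₀ = ∅ ∨ C ⊆ S₀)} := by
  ext C
  simp only [mem_filter, mem_insert]
  constructor
  · rintro ⟨hC, hSC⟩
    by_cases hP : C ∩ S₀ = ∅ ∨ C ⊆ S₀
    · exact Or.inl (eq_of_subset_of_inter_eq_empty_or_subset (ht.nonempty hS₀) hP hSC)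
    · exact Or.inr ⟨hC, hP⟩
  · rintro (rfl | ⟨hC, hP⟩)
    · exact ⟨hS₀, subset_rfl⟩
    · exact ⟨hC, (ht.ssubset_of_not_inter_eq_empty_or_subset hS₀ hC hP).subset⟩

lemma IsLTree.sum_insertLeaf (ht : IsLTree A t) (hj : j ∉ A) (g : Finset ℕ → ℝ) :
    ∑ S ∈ insertLeaf t S₀ j, g S =
      ∑ C ∈ t with (C ∩ S₀ = ∅ ∨ C ⊆ S₀), g C + ∑ C ∈ t with S₀ ⊆ C, g (C ∪ {j}) + g {j} := by
  have hjt : ∀ C ∈ t, j ∉ C := fun C hC => ht.notMem_of_mem hj hC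
  have hinj : Set.InjOn (· ∪ {j}) (({C ∈ t | S₀ ⊆ C} : Finset (Finset ℕ)) : Set (Finset ℕ)) := by
    intro C hC D hD h
    simp only [coe_filter, Set.mem_ofPred_eq] at hC hD
    exact union_singleton_cancel (hjt C hC.1) (hjt D hD.1) h
  have hd₁ : Disjoint {C ∈ t | C ∩ S₀ = ∅ ∨ C ⊆ S₀} ({C ∈ t | S₀ ⊆ C}.image (· ∪ {j})) := by
    refine disjoint_left.mpr fun C hC hC' => ?_
    obtain ⟨D, -, rfl⟩ := mem_image.mp hC'
    exact hjt _ (mem_filter.mp hC).1 (by simp)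
  have hd₂ : Disjoint ({C ∈ t | C ∩ S₀ = ∅ ∨ C ⊆ S₀} ∪ {C ∈ t | S₀ ⊆ C}.image (· ∪ {j}))
      {{j}} := by
    refine disjoint_singleton_right.mpr fun h => ?_
    rcases mem_union.mp h with h | h
    · exact hjt _ (mem_filter.mp h).1 (mem_singleton_self j)
    · obtain ⟨D, hD, hDj⟩ := mem_image.mp h
      exact union_singleton_ne_singleton (ht.nonempty (mem_filter.mp hD).1)
        (hjt D (mem_filter.mp hD).1) hDj
  rw [insertLeaf, ← filter_or, sum_union hd₂, sum_union hd₁, sum_singleton, sum_image hinj]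

end InsertLeaf

/-- The edge of `t ∩ K` onto which the edge `S` of `t` projects: the trace on `K` of the
smallest edge of `t` that contains `S` and meets `K`. -/
def projEdge (K : Finset ℕ) (t : Finset (Finset ℕ)) (S : Finset ℕ) : Finset ℕ :=
  K.filter fun x => ∀ C ∈ t, S ⊆ C → (C ∩ K).Nonempty → x ∈ C

section Projection

variable {K A : Finset ℕ} {t : Finset (Finset ℕ)} {S₀ : Finset ℕ} {j : ℕ}

lemma mem_projEdge {S : Finset ℕ} {x : ℕ} :
    x ∈ projEdge K t S ↔ x ∈ K ∧ ∀ C ∈ t, S ⊆ C → (C ∩ K).Nonempty → x ∈ C :=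
  mem_filter

lemma IsLTree.piProjA_eq_projEdge (ht : IsLTree A t) (hAK : (A ∩ K).Nonempty) {i : ℕ}
    (hi : i ∈ A) : piProjA t K i = projEdge K t {i} := by
  have hF : (t.filter fun C => i ∈ C ∧ (C ∩ K).Nonempty).Nonempty :=
    ⟨A, mem_filter.mpr ⟨ht.root_mem (hAK.mono inter_subset_left), hi, hAK⟩⟩
  ext x
  simp only [piProjA, ancEdgeA, dif_pos hF, mem_inter, mem_inf'_id, mem_filter, mem_projEdge,
    singleton_subset_iff, and_imp]
  tauto

lemma projEdge_eq_self {S : Finset ℕ} (hS : S ∈ t) (hSK : S ⊆ K) (hSne : S.Nonempty) :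
    projEdge K t S = S := by
  ext x
  rw [mem_projEdge]
  refine ⟨fun hx => hx.2 S hS subset_rfl (by rwa [inter_eq_left.mpr hSK]), fun hx => ?_⟩
  exact ⟨hSK hx, fun C _ hSC _ => hSC hx⟩

lemma IsLTree.piProjA_of_mem (ht : IsLTree A t) {i : ℕ} (hi : i ∈ A) (hiK : i ∈ K) :
    piProjA t K i = {i} := by
  rw [ht.piProjA_eq_projEdge ⟨i, mem_inter.mpr ⟨hi, hiK⟩⟩ hi,
    projEdge_eq_self (ht.singleton_mem hi) (singleton_subset_iff.mpr hiK) (singleton_nonempty i)]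

lemma projEdge_eq_of_erase {t' : Finset (Finset ℕ)} {S S' : Finset ℕ} (hjK : j ∉ K)
    (h₁ : ∀ C' ∈ t', S' ⊆ C' → C' ≠ {j} → C'.erase j ∈ t ∧ S ⊆ C'.erase j)
    (h₂ : ∀ C ∈ t, S ⊆ C → ∃ C' ∈ t', S' ⊆ C' ∧ C'.erase j = C) :
    projEdge K t' S' = projEdge K t S := by
  have hK : ∀ C : Finset ℕ, C.erase j ∩ K = C ∩ K := fun C => by
    rw [erase_inter, erase_eq_of_notMem fun h => hjK (mem_inter.mp h).2]
  ext x
  simp only [mem_projEdge]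
  refine and_congr_right fun hxK => ?_
  have hxj : x ≠ j := fun h => hjK (h ▸ hxK)
  constructor
  · intro h C hC hSC hCK
    obtain ⟨C', hC', hSC', rfl⟩ := h₂ C hC hSC
    exact mem_erase.mpr ⟨hxj, h C' hC' hSC' (hK C' ▸ hCK)⟩
  · intro h C' hC' hSC' hC'K
    have hC'j : C' ≠ {j} := by
      rintro rfl
      simp [singleton_inter_of_notMem hjK] at hC'K
    obtain ⟨hC, hSC⟩ := h₁ C' hC' hSC' hC'j
    exact mem_of_mem_erase (h _ hC hSC (by rwa [hK]))

namespace IsLTree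

lemma projEdge_insertLeaf_of_mem (ht : IsLTree A t) (hj : j ∉ A) (hjK : j ∉ K) (hS₀ : S₀ ∈ t)
    {C : Finset ℕ} (hC : C ∈ t) : projEdge K (insertLeaf t S₀ j) C = projEdge K t C := by
  have hjC := ht.notMem_of_mem hj hC
  refine projEdge_eq_of_erase hjK (fun C' hC' hCC' hne => ?_) (fun D hD hCD => ?_)
  · exact ⟨(ht.erase_mem_of_mem_insertLeaf hj hC' hne).1, subset_erase.mpr ⟨hCC', hjC⟩⟩
  · have hjD := ht.notMem_of_mem hj hD
    rcases ht.laminar hD hS₀ with h | h | h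
    · exact ⟨D, mem_insertLeaf_of_mem hD (Or.inl h), hCD, erase_eq_of_notMem hjD⟩
    · exact ⟨D, mem_insertLeaf_of_mem hD (Or.inr h), hCD, erase_eq_of_notMem hjD⟩
    · exact ⟨D ∪ {j}, union_mem_insertLeaf hD h, hCD.trans subset_union_left,
        union_singleton_erase hjD⟩

lemma projEdge_insertLeaf_union (ht : IsLTree A t) (hj : j ∉ A) (hjK : j ∉ K) {C : Finset ℕ}
    (hC : C ∈ t) (hSC : S₀ ⊆ C) :
    projEdge K (insertLeaf t S₀ j) (C ∪ {j}) = projEdge K t C := by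
  have hjC := ht.notMem_of_mem hj hC
  refine projEdge_eq_of_erase hjK (fun C' hC' hCC' hne => ?_) (fun D hD hCD => ?_)
  · exact ⟨(ht.erase_mem_of_mem_insertLeaf hj hC' hne).1,
      subset_erase.mpr ⟨subset_union_left.trans hCC', hjC⟩⟩
  · exact ⟨D ∪ {j}, union_mem_insertLeaf hD (hSC.trans hCD), union_subset_union_left hCD,
      union_singleton_erase (ht.notMem_of_mem hj hD)⟩

lemma projEdge_insertLeaf_singleton (ht : IsLTree A t) (hj : j ∉ A) (hjK : j ∉ K) :
    projEdge K (insertLeaf t S₀ j) {j} = projEdge K t S₀ := by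
  refine projEdge_eq_of_erase hjK (fun C' hC' hjC' hne => ?_) (fun D hD hSD => ?_)
  · have h := ht.erase_mem_of_mem_insertLeaf hj hC' hne
    exact ⟨h.1, h.2 (singleton_subset_iff.mp hjC')⟩
  · exact ⟨D ∪ {j}, union_mem_insertLeaf hD hSD, subset_union_right,
      union_singleton_erase (ht.notMem_of_mem hj hD)⟩

end IsLTree

end Projection

section Weights

variable {K A : Finset ℕ} {t : Finset (Finset ℕ)} {S₀ : Finset ℕ} {j : ℕ}

lemma fordWeight_singleton (α : ℝ) (i : ℕ) : fordWeight α {i} = 1 - α := by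
  simp [fordWeight]

lemma fordWeight_of_two_le_card (α : ℝ) {C : Finset ℕ} (h : 2 ≤ C.card) : fordWeight α C = α :=
  if_pos h

lemma fordWeight_union_singleton (α : ℝ) {C : Finset ℕ} (hC : C.Nonempty) (hjC : j ∉ C) :
    fordWeight α (C ∪ {j}) = α := by
  apply fordWeight_of_two_le_card
  rw [union_singleton, card_insert_of_notMem hjC]
  have := hC.card_pos
  omega

/-- Inserting a leaf adds total weight `α + (1 - α) = 1` over the projection of the chosen
edge (the new internal edge and the new leaf); every other edge keeps its weight and its
projection. -/
lemma IsLTree.sum_fordWeight_insertLeaf (ht : IsLTree A t) (hj : j ∉ A) (hjK : j ∉ K)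
    (hS₀ : S₀ ∈ t) (α : ℝ) (F : Finset ℕ → ℝ) :
    ∑ S ∈ insertLeaf t S₀ j, fordWeight α S * F (projEdge K (insertLeaf t S₀ j) S) =
      ∑ C ∈ t, fordWeight α C * F (projEdge K t C) + F (projEdge K t S₀) := by
  have hjt : ∀ C ∈ t, j ∉ C := fun C hC => ht.notMem_of_mem hj hC
  have hlift : ∑ C ∈ t with S₀ ⊆ C,
      fordWeight α (C ∪ {j}) * F (projEdge K (insertLeaf t S₀ j) (C ∪ {j})) =
      α * F (projEdge K t S₀) +
        ∑ C ∈ t with ¬(C ∩ S₀ = ∅ ∨ C ⊆ S₀), fordWeight α C * F (projEdge K t C) := by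
    rw [ht.filter_superset_eq_insert hS₀, sum_insert (by simp),
      ht.projEdge_insertLeaf_union hj hjK hS₀ subset_rfl,
      fordWeight_union_singleton α (ht.nonempty hS₀) (hjt S₀ hS₀)]
    refine congrArg _ (sum_congr rfl fun C hC => ?_)
    obtain ⟨hC, hP⟩ := mem_filter.mp hC
    have hSC := ht.ssubset_of_not_inter_eq_empty_or_subset hS₀ hC hP
    have hcard : 2 ≤ C.card := by
      have := card_lt_card hSC
      have := (ht.nonempty hS₀).card_pos
      omega
    rw [ht.projEdge_insertLeaf_union hj hjK hC hSC.subset,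
      fordWeight_union_singleton α (ht.nonempty hC) (hjt C hC), fordWeight_of_two_le_card α hcard]
  rw [ht.sum_insertLeaf hj, hlift, ht.projEdge_insertLeaf_singleton hj hjK,
    fordWeight_singleton, ← sum_filter_add_sum_filter_not t fun C => C ∩ S₀ = ∅ ∨ C ⊆ S₀,
    sum_congr rfl fun C hC => by
      rw [ht.projEdge_insertLeaf_of_mem hj hjK hS₀ (mem_filter.mp hC).1]]
  ring

end Weights

section Masses

variable {m k : ℕ} {t : Finset (Finset ℕ)} {S₀ : Finset ℕ}

lemma one_le_massOf (ht : IsLTree (lbl m) t) (hkm : k ≤ m) {i : ℕ} (hi : i ∈ lbl k) :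
    1 ≤ massOf m k t {i} := by
  have him : i ∈ lbl m := mem_lbl.mpr ⟨(mem_lbl.mp hi).1, (mem_lbl.mp hi).2.trans hkm⟩
  exact card_pos.mpr ⟨i, mem_filter.mpr ⟨him, ht.piProjA_of_mem him hi⟩⟩

lemma urnOf_self (hs : IsLTree (lbl k) t) : urnOf k k t = fun _ => 0 := by
  funext B
  have hmass : massOf k k t B = #{i ∈ lbl k | {i} = B} := by
    simp only [massOf, rhoDeco, rhoDecoA]
    exact congrArg card (filter_congr fun i hi => by rw [hs.piProjA_of_mem hi hi])
  have hle : massOf k k t B ≤ 1 := by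
    rw [hmass, card_le_one]
    intro a ha b hb
    exact singleton_injective ((mem_filter.mp ha).2.trans (mem_filter.mp hb).2.symm)
  unfold urnOf
  split_ifs with hB
  · omega
  · rw [hmass, card_eq_zero, filter_eq_empty_iff]
    rintro i - rfl
    simp at hB

lemma IsLTree.massOf_insertLeaf (ht : IsLTree (lbl m) t) (hk : 1 ≤ k) (hkm : k ≤ m)
    (hS₀ : S₀ ∈ t) (B : Finset ℕ) :
    massOf (m + 1) k (insertLeaf t S₀ (m + 1)) B =
      massOf m k t B + if projEdge (lbl k) t S₀ = B then 1 else 0 := by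
  have hj : m + 1 ∉ lbl m := succ_notMem_lbl_of_le le_rfl
  have hjK := succ_notMem_lbl_of_le hkm
  have ht' := isLTree_insertLeaf ht hj hS₀
  have hA' : (insert (m + 1) (lbl m) ∩ lbl k).Nonempty :=
    (lbl_inter_nonempty hk hkm).mono (inter_subset_inter_right (subset_insert _ _))
  have hold : ∀ i ∈ lbl m,
      piProjA (insertLeaf t S₀ (m + 1)) (lbl k) i = piProjA t (lbl k) i := fun i hi => by
    rw [ht'.piProjA_eq_projEdge hA' (mem_insert_of_mem hi),
      ht.piProjA_eq_projEdge (lbl_inter_nonempty hk hkm) hi,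
      ht.projEdge_insertLeaf_of_mem hj hjK hS₀ (ht.singleton_mem hi)]
  have hnew : piProjA (insertLeaf t S₀ (m + 1)) (lbl k) (m + 1) = projEdge (lbl k) t S₀ := by
    rw [ht'.piProjA_eq_projEdge hA' (mem_insert_self _ _),
      ht.projEdge_insertLeaf_singleton hj hjK]
  simp only [massOf, rhoDeco, rhoDecoA]
  rw [lbl_succ, filter_insert, hnew, filter_congr fun i hi => by rw [hold i hi]]
  split_ifs
  · rw [card_insert_of_notMem fun h' => hj (mem_filter.mp h').1]
  · rfl

/-- The truncated subtraction in `urnOf` is harmless: external edges have mass at least one. -/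
lemma IsLTree.urnOf_insertLeaf {s : Finset (Finset ℕ)} (ht : IsLTree (lbl m) t)
    (hs : IsLTree (lbl k) s) (hk : 1 ≤ k) (hkm : k ≤ m) (hS₀ : S₀ ∈ t)
    (hproj : projEdge (lbl k) t S₀ ∈ s) :
    urnOf (m + 1) k (insertLeaf t S₀ (m + 1)) = bumpF (urnOf m k t) (projEdge (lbl k) t S₀) := by
  funext B
  simp only [urnOf, bumpF, ht.massOf_insertLeaf hk hkm hS₀ B, eq_comm (a := B)]
  split_ifs with hcard hB <;> try omega
  obtain ⟨i, hi⟩ := card_eq_one.mp (le_antisymm hcard (card_pos.mpr (hs.nonempty (hB ▸ hproj))))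
  have := one_le_massOf ht hkm (hs.subset (hB ▸ hproj) (hi ▸ mem_singleton_self i))
  rw [← hi] at this
  omega

end Masses

section GrowthStep

variable {α : ℝ} {m : ℕ} {t : Finset (Finset ℕ)}

lemma IsLTree.sum_growStepF_mul (ht : IsLTree (lbl m) t) (α : ℝ) (g : Finset (Finset ℕ) → ℝ) :
    ∑ z : LTree (lbl (m + 1)), growStepF α m t z.1 * g z.1 =
      ∑ S ∈ t, fordWeight α S / (∑ S' ∈ t, fordWeight α S') * g (insertLeaf t S (m + 1)) := by
  simp only [growStepF, sum_mul]
  rw [sum_comm]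
  refine sum_congr rfl fun S hS => ?_
  have hz : IsLTree (lbl (m + 1)) (insertLeaf t S (m + 1)) :=
    lbl_succ m ▸ isLTree_insertLeaf ht (succ_notMem_lbl_of_le le_rfl) hS
  rw [Fintype.sum_eq_single ⟨_, hz⟩ fun z hz' => by
    rw [if_neg fun h => hz' (Subtype.ext h), zero_mul], if_pos rfl]

lemma exists_eq_insertLeaf_of_growStepF_ne_zero {t' : Finset (Finset ℕ)}
    (h : growStepF α m t t' ≠ 0) : ∃ S ∈ t, t' = insertLeaf t S (m + 1) := by
  obtain ⟨S, hS, hne⟩ := exists_ne_zero_of_sum_ne_zero h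
  exact ⟨S, hS, by_contra fun h' => hne (if_neg h')⟩

end GrowthStep

section Lumping

variable {X : ℕ → Type*} {Y : Type*} (P : ∀ n, X n → X (n + 1) → ℝ) (f : ∀ n, X n → Y)
  (I : ∀ n, X n → Prop)

lemma invariant_of_path (hI : ∀ n x x', I n x → P n x x' ≠ 0 → I (n + 1) x')
    {r : ℕ} (y : (l : Fin (r + 1)) → X l) (h₀ : I 0 (y 0))
    (hy : ∀ l : Fin r, P l (y l.castSucc) (y l.succ) ≠ 0) (l : Fin (r + 1)) : I l (y l) := by
  induction l using Fin.induction with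
  | zero => exact h₀
  | succ l ih => exact hI _ _ _ ih (hy l)

variable [∀ n, Fintype (X n)]

lemma sum_snoc_of_lumpable (Q : Y → Y → ℝ)
    (hQ : ∀ n x, I n x → ∀ c, ∑ x', P n x x' * (if f (n + 1) x' = c then 1 else 0) = Q (f n x) c)
    (hI : ∀ n x x', I n x → P n x x' ≠ 0 → I (n + 1) x')
    {x₀ : X 0} (hx₀ : I 0 x₀) (h : ℕ → Y) {r : ℕ} (y : (l : Fin (r + 1)) → X l) :
    ∑ x' : X (r + 1),
        (∏ l : Fin (r + 1), P l (Fin.snoc (α := fun l => X l) y x' l.castSucc)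
          (Fin.snoc (α := fun l => X l) y x' l.succ)) *
          (if Fin.snoc (α := fun l => X l) y x' ⟨0, (r + 1).succ_pos⟩ = x₀ ∧
            ∀ l : Fin (r + 1 + 1), f l (Fin.snoc (α := fun l => X l) y x' l) = h l then 1 else 0)
      = ((∏ l : Fin r, P l (y l.castSucc) (y l.succ)) *
          (if y ⟨0, r.succ_pos⟩ = x₀ ∧ ∀ l : Fin (r + 1), f l (y l) = h l then 1 else 0)) *
        Q (h r) (h (r + 1)) := by
  have hcond : ∀ x' : X (r + 1),
      (Fin.snoc (α := fun l => X l) y x' ⟨0, (r + 1).succ_pos⟩ = x₀ ∧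
        ∀ l : Fin (r + 1 + 1), f l (Fin.snoc (α := fun l => X l) y x' l) = h l) ↔
      (y ⟨0, r.succ_pos⟩ = x₀ ∧ ∀ l : Fin (r + 1), f l (y l) = h l) ∧
        f (r + 1) x' = h (r + 1) := by
    intro x'
    rw [Fin.forall_fin_succ', ← and_assoc]
    simp only [Fin.snoc_castSucc, Fin.snoc_last]
    rfl
  simp only [hcond, Fin.prod_univ_castSucc, Fin.succ_castSucc, Fin.snoc_castSucc,
    Fin.succ_last, Fin.snoc_last]
  dsimp only [Fin.val_last, Fin.val_castSucc]
  by_cases hy : y ⟨0, r.succ_pos⟩ = x₀ ∧ ∀ l : Fin (r + 1), f l (y l) = h l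
  · have hlast : ∀ x' : X (r + 1), (_ ∧ f (r + 1) x' = h (r + 1)) ↔ f (r + 1) x' = h (r + 1) :=
      fun _ => and_iff_right hy
    simp only [hlast, if_pos hy, mul_one, mul_assoc, ← mul_sum]
    by_cases hP : ∏ l : Fin r, P l (y l.castSucc) (y l.succ) = 0
    · rw [hP, zero_mul, zero_mul]
    have hIy := invariant_of_path P I hI y (hy.1 ▸ hx₀)
      (fun l => prod_ne_zero_iff.mp hP l (mem_univ l)) (Fin.last r)
    have hf : f r (y (Fin.last r)) = h r := hy.2 (Fin.last r)
    rw [hQ r (y (Fin.last r)) hIy, hf]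
  · simp only [hy, false_and, if_false, mul_zero, sum_const_zero, zero_mul]

/-- Dynkin's criterion for a function of a Markov chain to be Markov, in path-sum form. -/
lemma sum_paths_of_lumpable (Q : Y → Y → ℝ)
    (hQ : ∀ n x, I n x → ∀ c, ∑ x', P n x x' * (if f (n + 1) x' = c then 1 else 0) = Q (f n x) c)
    (hI : ∀ n x x', I n x → P n x x' ≠ 0 → I (n + 1) x')
    {x₀ : X 0} (hx₀ : I 0 x₀) (h : ℕ → Y) (r : ℕ) :
    ∑ y : (l : Fin (r + 1)) → X l,
        (∏ l : Fin r, P l (y l.castSucc) (y l.succ)) *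
          (if y ⟨0, r.succ_pos⟩ = x₀ ∧ ∀ l : Fin (r + 1), f l (y l) = h l then 1 else 0)
      = (if f 0 x₀ = h 0 then 1 else 0) * ∏ l : Fin r, Q (h l) (h (l + 1)) := by
  induction r with
  | zero =>
    rw [← (Fin.consEquiv fun l : Fin 1 => X l).sum_comp]
    simp [Fintype.sum_prod_type, Fin.forall_fin_one, ite_and, apply_ite card]
  | succ r ih =>
    rw [← (Fin.snocEquiv fun l : Fin (r + 2) => X l).sum_comp, Fintype.sum_prod_type, sum_comm]
    simp only [Fin.snocEquiv_apply]
    refine (sum_congr rfl fun y _ => sum_snoc_of_lumpable P f I Q hQ hI hx₀ h y).trans ?_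
    rw [← sum_mul, ih, Fin.prod_univ_castSucc, mul_assoc]
    rfl

lemma sum_weighted_paths_of_lumpable (Q : Y → Y → ℝ)
    (hQ : ∀ n x, I n x → ∀ c, ∑ x', P n x x' * (if f (n + 1) x' = c then 1 else 0) = Q (f n x) c)
    (hI : ∀ n x x', I n x → P n x x' ≠ 0 → I (n + 1) x')
    {x₀ : X 0} (hx₀ : I 0 x₀) (μ : X 0 → ℝ) (h : ℕ → Y) (r : ℕ) :
    ∑ y : (l : Fin (r + 1)) → X l,
        (μ (y ⟨0, r.succ_pos⟩) * ∏ l : Fin r, P l (y l.castSucc) (y l.succ)) *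
          (if y ⟨0, r.succ_pos⟩ = x₀ ∧ ∀ l : Fin (r + 1), f l (y l) = h l then 1 else 0)
      = μ x₀ * ((if f 0 x₀ = h 0 then 1 else 0) * ∏ l : Fin r, Q (h l) (h (l + 1))) := by
  rw [← sum_paths_of_lumpable P f I Q hQ hI hx₀ h r, mul_sum]
  refine sum_congr rfl fun y _ => ?_
  split_ifs with hy
  · rw [hy.1]
    ring
  · ring

end Lumping

def UrnInvariant (α : ℝ) (k : ℕ) (s : Finset (Finset ℕ)) (m : ℕ) (t : Finset (Finset ℕ)) :
    Prop :=
  (∀ S ∈ t, projEdge (lbl k) t S ∈ s) ∧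
    ∀ B ∈ s, ∑ S ∈ t with projEdge (lbl k) t S = B, fordWeight α S =
      fordWeight α B + urnOf m k t B

section Urn

variable {α : ℝ} {k m : ℕ} {s t : Finset (Finset ℕ)}

lemma urnInvariant_self (hs : IsLTree (lbl k) s) : UrnInvariant α k s k s := by
  have hproj : ∀ S ∈ s, projEdge (lbl k) s S = S := fun S hS =>
    projEdge_eq_self hS (hs.subset hS) (hs.nonempty hS)
  refine ⟨fun S hS => (hproj S hS).symm ▸ hS, fun B hB => ?_⟩
  rw [filter_congr fun S hS => by rw [hproj S hS], filter_eq', if_pos hB, sum_singleton,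
    urnOf_self hs]
  simp

lemma UrnInvariant.insertLeaf (hI : UrnInvariant α k s m t) (hs : IsLTree (lbl k) s)
    (ht : IsLTree (lbl m) t) (hk : 1 ≤ k) (hkm : k ≤ m) {S₀ : Finset ℕ} (hS₀ : S₀ ∈ t) :
    UrnInvariant α k s (m + 1) (insertLeaf t S₀ (m + 1)) := by
  have hj : m + 1 ∉ lbl m := succ_notMem_lbl_of_le le_rfl
  have hjK := succ_notMem_lbl_of_le hkm
  refine ⟨fun S' hS' => ?_, fun B hB => ?_⟩
  · rcases mem_insertLeaf_iff.mp hS' with ⟨hC, -⟩ | ⟨C, hC, hSC, rfl⟩ | rfl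
    · rw [ht.projEdge_insertLeaf_of_mem hj hjK hS₀ hC]
      exact hI.1 _ hC
    · rw [ht.projEdge_insertLeaf_union hj hjK hC hSC]
      exact hI.1 _ hC
    · rw [ht.projEdge_insertLeaf_singleton hj hjK]
      exact hI.1 _ hS₀
  · have h := ht.sum_fordWeight_insertLeaf hj hjK hS₀ α fun C => if C = B then 1 else 0
    simp only [mul_ite, mul_one, mul_zero, ← sum_filter] at h
    rw [h, hI.2 B hB, ht.urnOf_insertLeaf hs hk hkm hS₀ (hI.1 _ hS₀), bumpF]
    by_cases hBp : B = projEdge (lbl k) t S₀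
    · rw [if_pos hBp.symm, if_pos hBp]
      push_cast
      ring
    · rw [if_neg (Ne.symm hBp), if_neg hBp, add_zero]

lemma UrnInvariant.sum_growStepF_urnOf (hI : UrnInvariant α k s m t) (hs : IsLTree (lbl k) s)
    (ht : IsLTree (lbl m) t) (hk : 1 ≤ k) (hkm : k ≤ m) (c : Finset ℕ → ℕ) :
    ∑ z : LTree (lbl (m + 1)), growStepF α m t z.1 * (if urnOf (m + 1) k z.1 = c then 1 else 0) =
      urnStep α s (urnOf m k t) c := by
  set W := ∑ S ∈ t, fordWeight α S
  have hW : W = ∑ B ∈ s, (fordWeight α B + urnOf m k t B) := by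
    have h := sum_mul_comp_eq_sum_fiber hI.1 (fordWeight α) fun _ => (1 : ℝ)
    simp only [mul_one] at h
    exact h.trans (sum_congr rfl fun B hB => hI.2 B hB)
  let F : Finset ℕ → ℝ := fun B => (if bumpF (urnOf m k t) B = c then 1 else 0) / W
  calc _ = ∑ S ∈ t, fordWeight α S * F (projEdge (lbl k) t S) := by
        rw [ht.sum_growStepF_mul α fun u => if urnOf (m + 1) k u = c then 1 else 0]
        refine sum_congr rfl fun S hS => ?_
        rw [ht.urnOf_insertLeaf hs hk hkm hS (hI.1 S hS)]
        ring
    _ = ∑ B ∈ s, (fordWeight α B + urnOf m k t B) * F B := by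
        rw [sum_mul_comp_eq_sum_fiber hI.1]
        exact sum_congr rfl fun B hB => by rw [hI.2 B hB]
    _ = urnStep α s (urnOf m k t) c := by
        rw [urnStep, ← hW]
        refine sum_congr rfl fun B _ => ?_
        simp only [F, eq_comm (a := c)]
        ring

end Urn

theorem lemma_lempolya_general (α : ℝ) (k : ℕ) (hk : 2 ≤ k)
    (s : LTree (lbl k)) (hs : 0 < qF α k s) :
    ∀ (r : ℕ) (h : ℕ → (Finset ℕ → ℕ)),
      (∑ y : (l : Fin (r + 1)) → LTree (lbl (k + l.1)),
          (qF α k (y ⟨0, Nat.succ_pos r⟩) *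
              ∏ l : Fin r, growStepF α (k + l.1) (y l.castSucc).1 (y l.succ).1) *
            (if y ⟨0, Nat.succ_pos r⟩ = s ∧
                (∀ l : Fin (r + 1), urnOf (k + l.1) k (y l).1 = h l.1) then 1 else 0)) /
        qF α k s
      = (if h 0 = fun _ => 0 then 1 else 0) *
          ∏ l : Fin r, urnStep α s.1 (h l.1) (h (l.1 + 1)) := by
  intro r h
  rw [sum_weighted_paths_of_lumpable (X := fun n => LTree (lbl (k + n)))
    (fun n x x' => growStepF α (k + n) x.1 x'.1) (fun n x => urnOf (k + n) k x.1)
    (fun n x => UrnInvariant α k s.1 (k + n) x.1) (urnStep α s.1)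
    (fun n x hx c => hx.sum_growStepF_urnOf s.2 x.2 (by omega) (by omega) c)
    (fun n x x' hx hxx' => by
      obtain ⟨S, hS, hx'⟩ := exists_eq_insertLeaf_of_growStepF_ne_zero hxx'
      exact hx' ▸ hx.insertLeaf s.2 x.2 (by omega) (by omega) hS)
    (urnInvariant_self s.2), mul_div_cancel_left₀ _ hs.ne']
  simp only [Nat.add_zero, urnOf_self s.2, eq_comm (a := fun _ => 0)]

/-- **Lemma 4.9 (Pólya urn).** Conditionally on `T_k = 𝐬`, the edge-weight process
`(x_1(r)-1, …, x_k(r)-1, (y_B(r)))_{r ≥ 0}` of the projected decorated `k`-trees of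
Ford's alpha growth process is distributed as the generalized Pólya urn on the edges
of `𝐬` with weights `1-α+H_B` (external) and `α+H_B` (internal), started from zero. -/
theorem lemma_lempolya (α : ℝ) (hα0 : 0 ≤ α) (hα1 : α ≤ 1) (k : ℕ) (hk : 2 ≤ k)
    (s : LTree (lbl k)) (hs : 0 < qF α k s) :
    ∀ (r : ℕ) (h : ℕ → (Finset ℕ → ℕ)),
      (∑ y : (l : Fin (r + 1)) → LTree (lbl (k + l.1)),
          (qF α k (y ⟨0, Nat.succ_pos r⟩) *
              ∏ l : Fin r, growStepF α (k + l.1) (y l.castSucc).1 (y l.succ).1) *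
            (if y ⟨0, Nat.succ_pos r⟩ = s ∧
                (∀ l : Fin (r + 1), urnOf (k + l.1) k (y l).1 = h l.1) then 1 else 0)) /
        qF α k s
      = (if h 0 = fun _ => 0 then 1 else 0) *
          ∏ l : Fin r, urnStep α s.1 (h l.1) (h (l.1 + 1)) :=
  lemma_lempolya_general α k hk s hs
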